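/- arXiv:2003.05245 — 3 statements merged into one kernel-verified Lean document; each statement's English description precedes it below -/
import Mathlib

section
/- Let n ≥ 1, let s ≥ 0, let Z be an n×n real matrix with all entries nonnegative, and let χ be an n×n real matrix with all entries nonnegative such that every row sum and every column sum of χ is at most s. Then Σ_{i,k} χ_{ik}·Z_{ik} ≤ s · max_{σ} Σ_i Z_{i,σ(i)}, where the maximum is taken over all permutations σ of {1,…,n}. -/
/-- The max-weight matching value `ω*(Z) = max_σ Σ_i Z_{i,σ(i)}`. -/
noncomputable def maxWeight {n : ℕ} (Z : Matrix (Fin n) (Fin n) ℝ) : ℝ :=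
  Finset.univ.sup' ⟨1, Finset.mem_univ 1⟩ fun σ : Equiv.Perm (Fin n) => ∑ i, Z i (σ i)

lemma aux_ds {n : ℕ} (Z M : Matrix (Fin n) (Fin n) ℝ)
    (hM : M ∈ doublyStochastic ℝ (Fin n)) :
    ∑ i, ∑ k, M i k * Z i k ≤ maxWeight Z := by
  obtain ⟨w, hw0, hw1, hw2⟩ := exists_eq_sum_perm_of_mem_doublyStochastic hM
  have hMik : ∀ i k, M i k
      = ∑ σ : Equiv.Perm (Fin n), w σ * (if σ i = k then (1:ℝ) else 0) := by
    intro i k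
    rw [← hw2]
    simp [Equiv.Perm.permMatrix, PEquiv.toMatrix_apply, Equiv.toPEquiv_apply,
      Matrix.sum_apply, Matrix.smul_apply, smul_eq_mul, mul_ite, eq_comm]
  have key : ∑ i, ∑ k, M i k * Z i k
      = ∑ σ : Equiv.Perm (Fin n), w σ * ∑ i, Z i (σ i) := by
    calc ∑ i, ∑ k, M i k * Z i k
        = ∑ i, ∑ k, ∑ σ : Equiv.Perm (Fin n),
            w σ * (if σ i = k then (1:ℝ) else 0) * Z i k := by
          simp only [hMik, Finset.sum_mul]
      _ = ∑ i, ∑ σ : Equiv.Perm (Fin n), ∑ k,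
            w σ * (if σ i = k then (1:ℝ) else 0) * Z i k :=
          Finset.sum_congr rfl fun i _ => Finset.sum_comm
      _ = ∑ i, ∑ σ : Equiv.Perm (Fin n), w σ * Z i (σ i) := by
          refine Finset.sum_congr rfl fun i _ => Finset.sum_congr rfl fun σ _ => ?_
          rw [Finset.sum_eq_single (σ i)] <;> simp +contextual [eq_comm]
      _ = ∑ σ : Equiv.Perm (Fin n), ∑ i, w σ * Z i (σ i) := Finset.sum_comm
      _ = ∑ σ : Equiv.Perm (Fin n), w σ * ∑ i, Z i (σ i) := by
          simp [Finset.mul_sum]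
  rw [key]
  calc ∑ σ : Equiv.Perm (Fin n), w σ * ∑ i, Z i (σ i)
      ≤ ∑ σ : Equiv.Perm (Fin n), w σ * maxWeight Z := by
        refine Finset.sum_le_sum fun σ _ => mul_le_mul_of_nonneg_left ?_ (hw0 σ)
        exact Finset.le_sup' (fun σ : Equiv.Perm (Fin n) => ∑ i, Z i (σ i))
          (Finset.mem_univ σ)
    _ = maxWeight Z := by rw [← Finset.sum_mul, hw1, one_mul]

/-- Weight decomposition bound (eq. (40) of the paper): for a nonnegative
matrix `χ` with row and column sums at most `s`,
`Σ_{i,k} χ_{ik} Z_{ik} ≤ s · ω*(Z)`. -/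
theorem stmt_2 (n : ℕ) (hn : 1 ≤ n) (s : ℝ) (hs : 0 ≤ s)
    (Z χ : Matrix (Fin n) (Fin n) ℝ)
    (hZ : ∀ i k, 0 ≤ Z i k) (hχ : ∀ i k, 0 ≤ χ i k)
    (hrow : ∀ i, ∑ k, χ i k ≤ s) (hcol : ∀ k, ∑ i, χ i k ≤ s) :
    ∑ i, ∑ k, χ i k * Z i k ≤ s * maxWeight Z := by
  rcases eq_or_lt_of_le hs with rfl | hs'
  · -- s = 0 forces χ = 0
    have hz : ∀ i k, χ i k = 0 := by
      intro i k
      have h1 : χ i k ≤ ∑ k', χ i k' :=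
        Finset.single_le_sum (fun k' _ => hχ i k') (Finset.mem_univ k)
      have := hrow i
      linarith [hχ i k]
    simp [hz]
  · -- s > 0
    set r : Fin n → ℝ := fun i => s - ∑ k, χ i k with hr
    set c : Fin n → ℝ := fun k => s - ∑ i, χ i k with hc
    have hr0 : ∀ i, 0 ≤ r i := fun i => sub_nonneg.2 (hrow i)
    have hc0 : ∀ k, 0 ≤ c k := fun k => sub_nonneg.2 (hcol k)
    set T : ℝ := ∑ i, r i with hT
    have hTc : ∑ k, c k = T := by
      simp only [hr, hc, hT, Finset.sum_sub_distrib]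
      rw [Finset.sum_comm]
    have hT0 : 0 ≤ T := Finset.sum_nonneg fun i _ => hr0 i
    rcases eq_or_lt_of_le hT0 with hTz | hTpos
    · -- T = 0 : χ/s is doubly stochastic
      have hri : ∀ i, r i = 0 := by
        intro i
        have := (Finset.sum_eq_zero_iff_of_nonneg (fun i _ => hr0 i)).1 hTz.symm
        exact this i (Finset.mem_univ i)
      have hck : ∀ k, c k = 0 := by
        intro k
        have h0 : ∑ k, c k = 0 := by rw [hTc, ← hTz]
        exact (Finset.sum_eq_zero_iff_of_nonneg (fun k _ => hc0 k)).1 h0 k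
          (Finset.mem_univ k)
      have hmem : (s⁻¹ • χ) ∈ doublyStochastic ℝ (Fin n) := by
        rw [mem_doublyStochastic_iff_sum]
        refine ⟨fun i k => ?_, fun i => ?_, fun k => ?_⟩
        · simp only [Matrix.smul_apply, smul_eq_mul]
          exact mul_nonneg (inv_nonneg.2 hs) (hχ i k)
        · have := hri i
          simp only [Matrix.smul_apply, smul_eq_mul, ← Finset.mul_sum]
          rw [show ∑ k, χ i k = s by simp only [hr] at this; linarith]
          field_simp
        · have := hck k
          simp only [Matrix.smul_apply, smul_eq_mul, ← Finset.mul_sum]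
          rw [show ∑ i, χ i k = s by simp only [hc] at this; linarith]
          field_simp
      have := aux_ds Z _ hmem
      have h2 : ∑ i, ∑ k, (s⁻¹ • χ) i k * Z i k
          = s⁻¹ * ∑ i, ∑ k, χ i k * Z i k := by
        simp [Finset.mul_sum, mul_assoc]
      rw [h2] at this
      calc ∑ i, ∑ k, χ i k * Z i k
          = s * (s⁻¹ * ∑ i, ∑ k, χ i k * Z i k) := by field_simp
        _ ≤ s * maxWeight Z := mul_le_mul_of_nonneg_left this hs
    · -- T > 0 : pad χ to B with all row/col sums s
      set B : Matrix (Fin n) (Fin n) ℝ := fun i k => χ i k + r i * c k / T with hB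
      have hBrow : ∀ i, ∑ k, B i k = s := by
        intro i
        simp only [hB, Finset.sum_add_distrib, div_eq_mul_inv, mul_assoc,
          ← Finset.sum_mul, ← Finset.mul_sum]
        rw [hTc]
        have : r i * (T * T⁻¹) = r i := by field_simp
        rw [this]; simp [hr]
      have hBcol : ∀ k, ∑ i, B i k = s := by
        intro k
        simp only [hB, Finset.sum_add_distrib]
        have : ∑ i, r i * c k / T = c k := by
          rw [← Finset.sum_div, ← Finset.sum_mul, ← hT]
          field_simp
        rw [this]; simp [hc]
      have hB0 : ∀ i k, 0 ≤ B i k := fun i k =>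
        add_nonneg (hχ i k) (div_nonneg (mul_nonneg (hr0 i) (hc0 k)) hT0)
      have hmem : (s⁻¹ • B) ∈ doublyStochastic ℝ (Fin n) := by
        rw [mem_doublyStochastic_iff_sum]
        refine ⟨fun i k => ?_, fun i => ?_, fun k => ?_⟩
        · simp only [Matrix.smul_apply, smul_eq_mul]
          exact mul_nonneg (inv_nonneg.2 hs) (hB0 i k)
        · simp only [Matrix.smul_apply, smul_eq_mul, ← Finset.mul_sum, hBrow i]
          field_simp
        · simp only [Matrix.smul_apply, smul_eq_mul, ← Finset.mul_sum, hBcol k]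
          field_simp
      have hds := aux_ds Z _ hmem
      have h2 : ∑ i, ∑ k, (s⁻¹ • B) i k * Z i k
          = s⁻¹ * ∑ i, ∑ k, B i k * Z i k := by
        simp [Finset.mul_sum, mul_assoc]
      rw [h2] at hds
      have hle : ∑ i, ∑ k, χ i k * Z i k ≤ ∑ i, ∑ k, B i k * Z i k := by
        refine Finset.sum_le_sum fun i _ => Finset.sum_le_sum fun k _ => ?_
        exact mul_le_mul_of_nonneg_right
          (le_add_of_nonneg_right (div_nonneg (mul_nonneg (hr0 i) (hc0 k)) hT0))
          (hZ i k)
      calc ∑ i, ∑ k, χ i k * Z i k ≤ ∑ i, ∑ k, B i k * Z i k := hle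
        _ = s * (s⁻¹ * ∑ i, ∑ k, B i k * Z i k) := by field_simp
        _ ≤ s * maxWeight Z := mul_le_mul_of_nonneg_left hds hs
end

section
/- Let n ≥ 1 and let 0 < C₁ ≤ 1. Let Z be an n×n real matrix with all entries nonnegative, let ζ* be an n×n permutation matrix (a 0/1 matrix with exactly one 1 in each row and each column) attaining ω*(Z) = max_{σ} Σ_i Z_{i,σ(i)} (i.e., Σ_{i,k} ζ*_{ik} Z_{ik} = ω*(Z)), and let B be an n×n matrix with all entries in [0,1] such that every row sum and every column sum of B is at most 1 − C₁. If Z' = Z − ζ* + B is entrywise nonnegative, then Σ_{i,k} (Z'_{ik})² − Σ_{i,k} (Z_{ik})² ≤ −2·C₁·ω*(Z) + 2n². -/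
lemma perm_le_maxWeight {n : ℕ} (Z : Matrix (Fin n) (Fin n) ℝ) (τ : Equiv.Perm (Fin n)) :
    ∑ i, Z i (τ i) ≤ maxWeight Z := by
  unfold maxWeight
  exact Finset.le_sup' (fun τ : Equiv.Perm (Fin n) => ∑ i, Z i (τ i)) (Finset.mem_univ τ)

lemma doublyStochastic_le_maxWeight {n : ℕ} (Z : Matrix (Fin n) (Fin n) ℝ)
    (D : Matrix (Fin n) (Fin n) ℝ) (hD : D ∈ doublyStochastic ℝ (Fin n)) :
    ∑ i, ∑ k, Z i k * D i k ≤ maxWeight Z := by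
  have hmem : D ∈ convexHull ℝ {M | ∃ τ : Equiv.Perm (Fin n), τ.permMatrix ℝ = M} := by
    rw [← doublyStochastic_eq_convexHull_permMatrix]; exact hD
  have hsub : {M | ∃ τ : Equiv.Perm (Fin n), τ.permMatrix ℝ = M} ⊆
      {M : Matrix (Fin n) (Fin n) ℝ | ∑ i, ∑ k, Z i k * M i k ≤ maxWeight Z} := by
    rintro _ ⟨τ, rfl⟩
    simp only [Set.mem_setOf_eq]
    have : ∑ i, ∑ k, Z i k * (τ.permMatrix ℝ) i k = ∑ i, Z i (τ i) := by
      refine Finset.sum_congr rfl fun i _ => ?_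
      simp [Equiv.Perm.permMatrix, PEquiv.toMatrix_apply, Equiv.toPEquiv_apply,
        mul_ite, Finset.sum_ite_eq]
    rw [this]
    exact perm_le_maxWeight Z τ
  have hconv : Convex ℝ {M : Matrix (Fin n) (Fin n) ℝ |
      ∑ i, ∑ k, Z i k * M i k ≤ maxWeight Z} := by
    intro x hx y hy a b ha hb hab
    simp only [Set.mem_setOf_eq] at *
    have hrw : ∑ i, ∑ k, Z i k * (a • x + b • y) i k
        = a * (∑ i, ∑ k, Z i k * x i k) + b * (∑ i, ∑ k, Z i k * y i k) := by
      simp only [Finset.mul_sum, ← Finset.sum_add_distrib]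
      refine Finset.sum_congr rfl fun i _ => Finset.sum_congr rfl fun k _ => ?_
      simp [Matrix.add_apply, Matrix.smul_apply, smul_eq_mul]; ring
    rw [hrw]
    calc a * (∑ i, ∑ k, Z i k * x i k) + b * (∑ i, ∑ k, Z i k * y i k)
        ≤ a * maxWeight Z + b * maxWeight Z :=
          add_le_add (mul_le_mul_of_nonneg_left hx ha) (mul_le_mul_of_nonneg_left hy hb)
      _ = maxWeight Z := by rw [← add_mul, hab, one_mul]
  exact convexHull_min hsub hconv hmem

lemma substochastic_le_maxWeight {n : ℕ} (Z : Matrix (Fin n) (Fin n) ℝ)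
    (hZ : ∀ i k, 0 ≤ Z i k) (M : Matrix (Fin n) (Fin n) ℝ)
    (hM0 : ∀ i k, 0 ≤ M i k) (hrow : ∀ i, ∑ k, M i k ≤ 1) (hcol : ∀ k, ∑ i, M i k ≤ 1) :
    ∑ i, ∑ k, Z i k * M i k ≤ maxWeight Z := by
  set r : Fin n → ℝ := fun i => ∑ k, M i k with hr
  set c : Fin n → ℝ := fun k => ∑ i, M i k with hc
  set S : ℝ := ∑ i, r i with hS
  have hcard : ((Finset.univ : Finset (Fin n)).card : ℝ) = (n : ℝ) := by simp
  have hSc : ∑ k, c k = S := by rw [hS]; exact Finset.sum_comm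
  have hrsum : ∑ i, (1 - r i) = (n : ℝ) - S := by
    rw [Finset.sum_sub_distrib, ← hS, Finset.sum_const, Finset.card_univ, Fintype.card_fin,
      nsmul_eq_mul, mul_one]
  have hcsum : ∑ k, (1 - c k) = (n : ℝ) - S := by
    rw [Finset.sum_sub_distrib, hSc, Finset.sum_const, Finset.card_univ, Fintype.card_fin,
      nsmul_eq_mul, mul_one]
  have hSle : S ≤ (n : ℝ) := by
    calc S ≤ ∑ i : Fin n, (1 : ℝ) := Finset.sum_le_sum fun i _ => hrow i
      _ = (n : ℝ) := by simp
  by_cases hScase : S = (n : ℝ)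
  · -- M is already doubly stochastic
    have hzero : ∀ i ∈ Finset.univ, (1 - r i) = 0 := by
      rw [← Finset.sum_eq_zero_iff_of_nonneg (fun i _ => by linarith [hrow i])]
      rw [hrsum, hScase]; ring
    have hzeroc : ∀ k ∈ Finset.univ, (1 - c k) = 0 := by
      rw [← Finset.sum_eq_zero_iff_of_nonneg (fun k _ => by linarith [hcol k])]
      rw [hcsum, hScase]; ring
    refine doublyStochastic_le_maxWeight Z M ?_
    rw [mem_doublyStochastic_iff_sum]
    exact ⟨hM0, fun i => by have := hzero i (Finset.mem_univ i); linarith,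
      fun k => by have := hzeroc k (Finset.mem_univ k); linarith⟩
  · have ht : (0 : ℝ) < (n : ℝ) - S := lt_of_le_of_ne (by linarith) (by
      intro h; exact hScase (by linarith))
    set t : ℝ := (n : ℝ) - S with htdef
    set D : Matrix (Fin n) (Fin n) ℝ :=
      Matrix.of (fun i k => M i k + (1 - r i) * (1 - c k) / t) with hD
    have hDapp : ∀ i k, D i k = M i k + (1 - r i) * (1 - c k) / t := fun i k => rfl
    have hDmem : D ∈ doublyStochastic ℝ (Fin n) := by
      rw [mem_doublyStochastic_iff_sum]
      refine ⟨fun i k => ?_, fun i => ?_, fun k => ?_⟩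
      · have h1 : 0 ≤ 1 - r i := by linarith [hrow i]
        have h2 : 0 ≤ 1 - c k := by linarith [hcol k]
        have := hM0 i k
        rw [hDapp]
        positivity
      · have : ∑ k, D i k = r i + (1 - r i) * (∑ k, (1 - c k)) / t := by
          simp only [hDapp]
          rw [Finset.sum_add_distrib, ← Finset.sum_div, ← Finset.mul_sum]
        rw [this, hcsum, mul_div_assoc, div_self ht.ne', mul_one]
        ring
      · have : ∑ i, D i k = c k + (∑ i, (1 - r i)) * (1 - c k) / t := by
          simp only [hDapp]
          rw [Finset.sum_add_distrib, ← Finset.sum_div, ← Finset.sum_mul]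
        rw [this, hrsum, mul_comm, mul_div_assoc, div_self ht.ne', mul_one]
        ring
    calc ∑ i, ∑ k, Z i k * M i k ≤ ∑ i, ∑ k, Z i k * D i k := by
          refine Finset.sum_le_sum fun i _ => Finset.sum_le_sum fun k _ => ?_
          refine mul_le_mul_of_nonneg_left ?_ (hZ i k)
          rw [hDapp]
          have h1 : 0 ≤ 1 - r i := by linarith [hrow i]
          have h2 : 0 ≤ 1 - c k := by linarith [hcol k]
          have : 0 ≤ (1 - r i) * (1 - c k) / t := by positivity
          linarith
      _ ≤ maxWeight Z := doublyStochastic_le_maxWeight Z D hDmem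

/-- Combined drift inequality (eqs. (41), (52) of the paper): for the
max-weight schedule `ζ* = P_σ` and arrivals `B` with row/column sums at most
`1 - C₁`, the Lyapunov drift satisfies `L(Z') - L(Z) ≤ -2C₁ ω*(Z) + 2n²`. -/
theorem stmt_5 (n : ℕ) (hn : 1 ≤ n) (C₁ : ℝ) (hC₁ : 0 < C₁) (hC₁' : C₁ ≤ 1)
    (Z : Matrix (Fin n) (Fin n) ℝ) (hZ : ∀ i k, 0 ≤ Z i k)
    (ζstar : Matrix (Fin n) (Fin n) ℝ)
    (σ : Equiv.Perm (Fin n))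
    (hperm : ∀ i k, ζstar i k = if σ i = k then (1 : ℝ) else 0)
    (hopt : ∑ i, ∑ k, ζstar i k * Z i k = maxWeight Z)
    (B : Matrix (Fin n) (Fin n) ℝ)
    (hB0 : ∀ i k, 0 ≤ B i k) (hB1 : ∀ i k, B i k ≤ 1)
    (hBrow : ∀ i, ∑ k, B i k ≤ 1 - C₁) (hBcol : ∀ k, ∑ i, B i k ≤ 1 - C₁)
    (Z' : Matrix (Fin n) (Fin n) ℝ)
    (hZ'def : ∀ i k, Z' i k = Z i k - ζstar i k + B i k)
    (hZ' : ∀ i k, 0 ≤ Z' i k) :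
    (∑ i, ∑ k, (Z' i k) ^ 2) - (∑ i, ∑ k, (Z i k) ^ 2)
      ≤ -2 * C₁ * maxWeight Z + 2 * (n : ℝ) ^ 2 := by
  -- key bound on arrivals
  have key : ∑ i, ∑ k, Z i k * B i k ≤ (1 - C₁) * maxWeight Z := by
    rcases eq_or_lt_of_le hC₁' with h1 | h1
    · -- C₁ = 1 : B = 0
      subst h1
      have hB : ∀ i k, B i k = 0 := by
        intro i k
        have hle : B i k ≤ ∑ k', B i k' :=
          Finset.single_le_sum (fun k' _ => hB0 i k') (Finset.mem_univ k)
        have h2 := hBrow i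
        have h3 := hB0 i k
        linarith
      have hzz : ∑ i, ∑ k, Z i k * B i k = 0 := by
        refine Finset.sum_eq_zero fun i _ => Finset.sum_eq_zero fun k _ => ?_
        rw [hB i k, mul_zero]
      rw [hzz]; simp
    · have hc : (0 : ℝ) < 1 - C₁ := by linarith
      set M : Matrix (Fin n) (Fin n) ℝ := Matrix.of (fun i k => B i k / (1 - C₁)) with hM
      have hMapp : ∀ i k, M i k = B i k / (1 - C₁) := fun i k => rfl
      have hkey : ∑ i, ∑ k, Z i k * M i k ≤ maxWeight Z := by
        refine substochastic_le_maxWeight Z hZ M (fun i k => by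
            rw [hMapp]; exact div_nonneg (hB0 i k) hc.le) (fun i => ?_) (fun k => ?_)
        · have : ∑ k, M i k = (∑ k, B i k) / (1 - C₁) := by
            simp only [hMapp]; rw [Finset.sum_div]
          rw [this, div_le_one hc]; exact hBrow i
        · have : ∑ i, M i k = (∑ i, B i k) / (1 - C₁) := by
            simp only [hMapp]; rw [Finset.sum_div]
          rw [this, div_le_one hc]; exact hBcol k
      have heq : ∑ i, ∑ k, Z i k * M i k = (∑ i, ∑ k, Z i k * B i k) / (1 - C₁) := by
        simp only [hMapp, ← mul_div_assoc, ← Finset.sum_div]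
      rw [heq, div_le_iff₀ hc] at hkey
      linarith [hkey]
  -- expansion of the drift
  have h1 : (∑ i, ∑ k, (Z' i k) ^ 2) - ∑ i, ∑ k, (Z i k) ^ 2
      = ∑ i, ∑ k, (2 * (Z i k * B i k) - 2 * (ζstar i k * Z i k)
          + (B i k - ζstar i k) ^ 2) := by
    rw [← Finset.sum_sub_distrib]
    refine Finset.sum_congr rfl fun i _ => ?_
    rw [← Finset.sum_sub_distrib]
    refine Finset.sum_congr rfl fun k _ => ?_
    rw [hZ'def]; ring
  have h2 : ∑ i, ∑ k, (2 * (Z i k * B i k) - 2 * (ζstar i k * Z i k)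
        + (B i k - ζstar i k) ^ 2)
      = 2 * (∑ i, ∑ k, Z i k * B i k) - 2 * (∑ i, ∑ k, ζstar i k * Z i k)
        + ∑ i, ∑ k, (B i k - ζstar i k) ^ 2 := by
    simp only [Finset.sum_add_distrib, Finset.sum_sub_distrib, Finset.mul_sum]
  have h3 : ∑ i, ∑ k, (B i k - ζstar i k) ^ 2 ≤ (n : ℝ) ^ 2 := by
    have hconst : ∑ i : Fin n, ∑ k : Fin n, (1 : ℝ) = (n : ℝ) ^ 2 := by
      simp [sq]
    rw [← hconst]
    refine Finset.sum_le_sum fun i _ => Finset.sum_le_sum fun k _ => ?_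
    have hb0 := hB0 i k; have hb1 := hB1 i k
    rw [hperm]
    split
    · nlinarith
    · nlinarith
  have hnn : (0 : ℝ) ≤ (n : ℝ) ^ 2 := by positivity
  rw [h1, h2, hopt]
  nlinarith [key, h3]
end

section
/- Let n ≥ 1 and let 0 < C₁ ≤ 1. Let Z be an n×n real matrix with all entries nonnegative, let ζ* be an n×n permutation matrix attaining ω*(Z) = max_{σ} Σ_i Z_{i,σ(i)}, and let B be an n×n matrix with all entries in [0,1] such that every row sum and every column sum of B is at most 1 − C₁. If Z' = Z − ζ* + B is entrywise nonnegative, then Σ_{i,k} (Z'_{ik})² − Σ_{i,k} (Z_{ik})² ≤ −(2C₁/n)·Σ_{i,k} Z_{ik} + 2n². -/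
/-!
Expanding the square, `L(Z') - L(Z) = 2⟨Z, B⟩ - 2⟨Z, ζ*⟩ + ‖B - ζ*‖²`, and the last term is at
most `n²` since all entries lie in `[0, 1]`. By Birkhoff's theorem the linear functional `⟨Z, ·⟩`
is bounded by `ω*(Z)` on doubly stochastic matrices. The slack of `B` can be filled up so that `B`
is dominated by `1 - C₁` times a doubly stochastic matrix, whence `⟨Z, B⟩ ≤ (1 - C₁) ω*(Z)`, while
`⟨Z, ζ*⟩ = ω*(Z)`. So the drift is at most `-2 C₁ ω*(Z) + n²`, and the uniform doubly stochastic
matrix with entries `1/n` gives `|Z| / n ≤ ω*(Z)`.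
-/

open Finset Matrix

lemma le_maxWeight {n : ℕ} (Z : Matrix (Fin n) (Fin n) ℝ) (σ : Equiv.Perm (Fin n)) :
    ∑ i, Z i (σ i) ≤ maxWeight Z :=
  le_sup' (fun τ : Equiv.Perm (Fin n) => ∑ i, Z i (τ i)) (mem_univ σ)

lemma sum_mul_le_maxWeight_of_mem_doublyStochastic {n : ℕ} (Z M : Matrix (Fin n) (Fin n) ℝ)
    (hM : M ∈ doublyStochastic ℝ (Fin n)) :
    ∑ i, ∑ k, Z i k * M i k ≤ maxWeight Z := by
  have hlin : IsLinearMap ℝ fun M : Matrix (Fin n) (Fin n) ℝ => ∑ i, ∑ k, Z i k * M i k :=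
    { map_add := fun M N => by simp only [Matrix.add_apply, mul_add, sum_add_distrib]
      map_smul := fun c M => by
        simp only [Matrix.smul_apply, smul_eq_mul, mul_sum, mul_left_comm] }
  rw [← SetLike.mem_coe, doublyStochastic_eq_convexHull_permMatrix] at hM
  refine convexHull_min ?_ (convex_halfSpace_le hlin (maxWeight Z)) hM
  rintro _ ⟨σ, rfl⟩
  simpa [Equiv.Perm.permMatrix, PEquiv.toMatrix_apply, Equiv.toPEquiv_apply] using
    le_maxWeight Z σ

/-- Add the rank-one matrix `r cᵀ / S` built from the row slacks `r`, the column slacks `c` and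
their common total `S`; if `S = 0` all slacks vanish. -/
lemma exists_le_sum_eq_of_sum_le {ι : Type*} [Fintype ι] {A : Matrix ι ι ℝ} {s : ℝ}
    (hA : ∀ i k, 0 ≤ A i k) (hrow : ∀ i, ∑ k, A i k ≤ s) (hcol : ∀ k, ∑ i, A i k ≤ s) :
    ∃ M : Matrix ι ι ℝ, (∀ i k, A i k ≤ M i k) ∧ (∀ i k, 0 ≤ M i k) ∧
      (∀ i, ∑ k, M i k = s) ∧ (∀ k, ∑ i, M i k = s) := by
  set r : ι → ℝ := fun i => s - ∑ k, A i k
  set c : ι → ℝ := fun k => s - ∑ i, A i k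
  set S := ∑ i, r i
  have hr : ∀ i, 0 ≤ r i := fun i => sub_nonneg.2 (hrow i)
  have hc : ∀ k, 0 ≤ c k := fun k => sub_nonneg.2 (hcol k)
  have hcS : ∑ k, c k = S := by
    simp only [c, r, S, sum_sub_distrib]
    rw [sum_comm]
  have hS : 0 ≤ S := sum_nonneg fun i _ => hr i
  have cancel : ∀ {x : ι → ℝ}, (∀ i, 0 ≤ x i) → ∑ i, x i = S → ∀ i, x i * S / S = x i := by
    intro x hx hxS i
    rcases hS.eq_or_lt with hS0 | hSpos
    · rw [(sum_eq_zero_iff_of_nonneg fun j _ => hx j).1 (hxS.trans hS0.symm) i (mem_univ i),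
        zero_mul, zero_div]
    · exact mul_div_cancel_right₀ _ hSpos.ne'
  refine ⟨fun i k => A i k + r i * c k / S, fun i k => ?_, fun i k => ?_, fun i => ?_,
    fun k => ?_⟩
  · have : 0 ≤ r i * c k / S := div_nonneg (mul_nonneg (hr i) (hc k)) hS
    linarith
  · exact add_nonneg (hA i k) (div_nonneg (mul_nonneg (hr i) (hc k)) hS)
  · rw [sum_add_distrib, ← sum_div, ← mul_sum, hcS, cancel hr rfl i]
    simp only [r]; ring
  · rw [sum_add_distrib, ← sum_div, ← sum_mul, show ∑ i, r i = S from rfl, mul_comm,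
      cancel hc hcS k]
    simp only [c]; ring

lemma sum_mul_le_mul_maxWeight {n : ℕ} {Z B : Matrix (Fin n) (Fin n) ℝ} {s : ℝ} (hs : 0 ≤ s)
    (hZ : ∀ i k, 0 ≤ Z i k) (hB : ∀ i k, 0 ≤ B i k) (hrow : ∀ i, ∑ k, B i k ≤ s)
    (hcol : ∀ k, ∑ i, B i k ≤ s) :
    ∑ i, ∑ k, Z i k * B i k ≤ s * maxWeight Z := by
  obtain ⟨M, hBM, hM⟩ := exists_le_sum_eq_of_sum_le hB hrow hcol
  obtain ⟨D, hD, rfl⟩ := (exists_mem_doublyStochastic_eq_smul_iff hs).2 hM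
  calc ∑ i, ∑ k, Z i k * B i k ≤ ∑ i, ∑ k, Z i k * (s • D) i k :=
        sum_le_sum fun i _ => sum_le_sum fun k _ => mul_le_mul_of_nonneg_left (hBM i k) (hZ i k)
    _ = s * ∑ i, ∑ k, Z i k * D i k := by
        simp only [Matrix.smul_apply, smul_eq_mul, mul_sum, mul_left_comm]
    _ ≤ s * maxWeight Z :=
        mul_le_mul_of_nonneg_left (sum_mul_le_maxWeight_of_mem_doublyStochastic Z D hD) hs

lemma sum_div_card_le_maxWeight {n : ℕ} (Z : Matrix (Fin n) (Fin n) ℝ) :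
    (∑ i, ∑ k, Z i k) / n ≤ maxWeight Z := by
  have hsum : ∀ i : Fin n, ∑ _k : Fin n, (n : ℝ)⁻¹ = 1 := fun i => by
    rw [sum_const, card_univ, Fintype.card_fin, nsmul_eq_mul,
      mul_inv_cancel₀ (Nat.cast_ne_zero.2 (Fin.pos i).ne')]
  have huniform : (of fun _ _ => (n : ℝ)⁻¹ : Matrix (Fin n) (Fin n) ℝ) ∈
      doublyStochastic ℝ (Fin n) :=
    mem_doublyStochastic_iff_sum.2 ⟨fun _ _ => inv_nonneg.2 n.cast_nonneg, hsum, hsum⟩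
  simpa [div_eq_mul_inv, sum_mul] using
    sum_mul_le_maxWeight_of_mem_doublyStochastic Z _ huniform

lemma sum_sq_sub_add_sub_sum_sq {ι κ R : Type*} [Fintype ι] [Fintype κ] [CommRing R]
    (Z P B : Matrix ι κ R) :
    ∑ i, ∑ k, (Z i k - P i k + B i k) ^ 2 - ∑ i, ∑ k, Z i k ^ 2 =
      2 * ∑ i, ∑ k, Z i k * B i k - 2 * ∑ i, ∑ k, Z i k * P i k +
        ∑ i, ∑ k, (B i k - P i k) ^ 2 := by
  simp only [mul_sum, ← sum_sub_distrib, ← sum_add_distrib]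
  exact sum_congr rfl fun i _ => sum_congr rfl fun k _ => by ring

lemma sum_sq_sub_le_card_mul_card {ι κ : Type*} [Fintype ι] [Fintype κ] {A B : Matrix ι κ ℝ}
    (hA0 : ∀ i k, 0 ≤ A i k) (hA1 : ∀ i k, A i k ≤ 1)
    (hB0 : ∀ i k, 0 ≤ B i k) (hB1 : ∀ i k, B i k ≤ 1) :
    ∑ i, ∑ k, (A i k - B i k) ^ 2 ≤ Fintype.card ι * Fintype.card κ := by
  calc ∑ i, ∑ k, (A i k - B i k) ^ 2 ≤ ∑ _i : ι, ∑ _k : κ, (1 : ℝ) :=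
        sum_le_sum fun i _ => sum_le_sum fun k _ => by
          nlinarith [hA0 i k, hA1 i k, hB0 i k, hB1 i k]
    _ = Fintype.card ι * Fintype.card κ := by simp

theorem stmt_6_general (n : ℕ) (C₁ : ℝ) (hC₁ : 0 < C₁) (hC₁' : C₁ ≤ 1)
    (Z : Matrix (Fin n) (Fin n) ℝ) (hZ : ∀ i k, 0 ≤ Z i k)
    (ζstar : Matrix (Fin n) (Fin n) ℝ)
    (σ : Equiv.Perm (Fin n))
    (hperm : ∀ i k, ζstar i k = if σ i = k then (1 : ℝ) else 0)
    (hopt : ∑ i, ∑ k, ζstar i k * Z i k = maxWeight Z)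
    (B : Matrix (Fin n) (Fin n) ℝ)
    (hB0 : ∀ i k, 0 ≤ B i k) (hB1 : ∀ i k, B i k ≤ 1)
    (hBrow : ∀ i, ∑ k, B i k ≤ 1 - C₁) (hBcol : ∀ k, ∑ i, B i k ≤ 1 - C₁)
    (Z' : Matrix (Fin n) (Fin n) ℝ)
    (hZ'def : ∀ i k, Z' i k = Z i k - ζstar i k + B i k) :
    (∑ i, ∑ k, (Z' i k) ^ 2) - (∑ i, ∑ k, (Z i k) ^ 2)
      ≤ -(2 * C₁ / (n : ℝ)) * (∑ i, ∑ k, Z i k) + 2 * (n : ℝ) ^ 2 := by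
  have hζ0 : ∀ i k, 0 ≤ ζstar i k := fun i k => by rw [hperm]; split_ifs <;> norm_num
  have hζ1 : ∀ i k, ζstar i k ≤ 1 := fun i k => by rw [hperm]; split_ifs <;> norm_num
  have hZζ : ∑ i, ∑ k, Z i k * ζstar i k = maxWeight Z := by simpa only [mul_comm] using hopt
  have hZB : ∑ i, ∑ k, Z i k * B i k ≤ (1 - C₁) * maxWeight Z :=
    sum_mul_le_mul_maxWeight (sub_nonneg.2 hC₁') hZ hB0 hBrow hBcol
  have hquad : ∑ i, ∑ k, (B i k - ζstar i k) ^ 2 ≤ n * n := by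
    simpa using sum_sq_sub_le_card_mul_card hB0 hB1 hζ0 hζ1
  have hmean : 2 * C₁ / n * ∑ i, ∑ k, Z i k ≤ 2 * C₁ * maxWeight Z := by
    rw [div_mul_eq_mul_div, mul_div_assoc]
    exact mul_le_mul_of_nonneg_left (sum_div_card_le_maxWeight Z) (by positivity)
  simp only [hZ'def, sum_sq_sub_add_sub_sum_sq, hZζ]
  linarith [sq_nonneg (n : ℝ)]

/-- Drift inequality of eq. (63) of the paper: for the max-weight schedule
`ζ* = P_σ` and arrivals `B` with row/column sums at most `1 - C₁`,
`L(Z') - L(Z) ≤ -(2C₁/n)|Z| + 2n²`. -/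
theorem stmt_6 (n : ℕ) (hn : 1 ≤ n) (C₁ : ℝ) (hC₁ : 0 < C₁) (hC₁' : C₁ ≤ 1)
    (Z : Matrix (Fin n) (Fin n) ℝ) (hZ : ∀ i k, 0 ≤ Z i k)
    (ζstar : Matrix (Fin n) (Fin n) ℝ)
    (σ : Equiv.Perm (Fin n))
    (hperm : ∀ i k, ζstar i k = if σ i = k then (1 : ℝ) else 0)
    (hopt : ∑ i, ∑ k, ζstar i k * Z i k = maxWeight Z)
    (B : Matrix (Fin n) (Fin n) ℝ)
    (hB0 : ∀ i k, 0 ≤ B i k) (hB1 : ∀ i k, B i k ≤ 1)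
    (hBrow : ∀ i, ∑ k, B i k ≤ 1 - C₁) (hBcol : ∀ k, ∑ i, B i k ≤ 1 - C₁)
    (Z' : Matrix (Fin n) (Fin n) ℝ)
    (hZ'def : ∀ i k, Z' i k = Z i k - ζstar i k + B i k)
    (hZ' : ∀ i k, 0 ≤ Z' i k) :
    (∑ i, ∑ k, (Z' i k) ^ 2) - (∑ i, ∑ k, (Z i k) ^ 2)
      ≤ -(2 * C₁ / (n : ℝ)) * (∑ i, ∑ k, Z i k) + 2 * (n : ℝ) ^ 2 :=
  stmt_6_general n C₁ hC₁ hC₁' Z hZ ζstar σ hperm hopt B hB0 hB1 hBrow hBcol Z' hZ'def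
end
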